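/- Bailey pair #5 (shifted McLaughlin–Sills P1): The sequences β_n = (−1;q³)_n / ((q;q)_{2n} (−1;q)_n) and α_m defined by α_m = ((1 − q^{2m+1})/(1 − q)) · c_m, where c_m = q^{(m²−m)/2} if m ≡ 0 (mod 3), c_m = −q^{(m²−m)/2} if m ≡ 2 (mod 3), and c_m = 0 if m ≡ 1 (mod 3), form a Bailey pair with respect to base a = q. Here β_0 = 1 and for n ≥ 1 one has β_n = (−q³;q³)_{n−1} / ((q;q)_{2n} (−q;q)_{n−1}). -/

import Mathlib

open Finset

noncomputable def qPoch (a q : ℂ) (n : ℕ) : ℂ :=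
  ∏ t ∈ Finset.range n, (1 - a * q ^ t)

noncomputable def qPochInf (a q : ℂ) : ℂ :=
  ∏' t : ℕ, (1 - a * q ^ t)

def IsBaileyPair (q a : ℂ) (α β : ℕ → ℂ) : Prop :=
  ∀ n : ℕ, β n =
    ∑ t ∈ Finset.range (n + 1), α t / (qPoch q q (n - t) * qPoch (a * q) q (n + t))

/-!
With `a = q` the Bailey sum is `∑ₜ (1 - q^(2t+1)) c_t [2n+1, n-t]_q / (q)_(2n+1)`, while
`β_n = P_n / (q)_(2n)` with `P_n = ∏_{j<n} (1 - q^j + q^(2j)) = (-1;q³)_n / (-1;q)_n`. So the claim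
is the polynomial identity `∑ₜ (1 - q^(2t+1)) c_t [2n+1, n-t]_q = (1 - q^(2n+1)) P_n`.

Write `c_t = ε(t) q^T(t)` with `T(t) = t(t-1)/2` and `ε` the period-3 sign, and put
`thetaSum q N m c = ∑_{j=0}^{N} ε(m-j) q^T(m-j+c) [N, j]_q`. The involution `t ↦ -1-t` negates `ε`,
swaps `T(t)` and `T(t+2)` and fixes `[2n+1, n-t]_q`, so the left side is `thetaSum q (2n+1) n 0`.
The two q-Pascal rules give recurrences in `N`; periodicity of `ε` and the reflection
`thetaSum q N m c = -thetaSum q N (N-m-1) (2-c)` close them along the diagonal to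
`thetaSum q (2n+3) (n+2) 0 = (1 - q^(n+1) + q^(2n+2)) thetaSum q (2n+1) (n+1) 0`, whence `P_n`.
-/

theorem qPoch_zero (a q : ℂ) : qPoch a q 0 = 1 :=
  prod_range_zero _

theorem qPoch_succ (a q : ℂ) (n : ℕ) : qPoch a q (n + 1) = qPoch a q n * (1 - a * q ^ n) :=
  prod_range_succ _ n

theorem qPoch_succ' (a q : ℂ) (n : ℕ) : qPoch a q (n + 1) = (1 - a) * qPoch (a * q) q n := by
  rw [qPoch, prod_range_succ', pow_zero, mul_one, mul_comm, qPoch]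
  exact congrArg _ (prod_congr rfl fun t _ => by ring)

theorem qPoch_ne_zero {a q : ℂ} (hq : ‖q‖ < 1) (ha : ‖a‖ ≤ 1) (ha1 : a ≠ 1) (n : ℕ) :
    qPoch a q n ≠ 0 := by
  refine prod_ne_zero_iff.mpr fun t _ => sub_ne_zero.mpr (Ne.symm ?_)
  rcases t with _ | t
  · simpa using ha1
  · refine ne_of_apply_ne norm (ne_of_lt ?_)
    rw [norm_mul, norm_pow, norm_one]
    calc ‖a‖ * ‖q‖ ^ (t + 1) ≤ 1 * ‖q‖ ^ (t + 1) := by gcongr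
      _ < 1 := by simpa using pow_lt_one₀ (norm_nonneg q) hq t.succ_ne_zero

noncomputable def gaussBinom (q : ℂ) : ℕ → ℤ → ℂ
  | 0, k => if k = 0 then 1 else 0
  | N + 1, k => gaussBinom q N (k - 1) + q ^ k * gaussBinom q N k

section

variable {q : ℂ}

theorem gaussBinom_succ (N : ℕ) (k : ℤ) :
    gaussBinom q (N + 1) k = gaussBinom q N (k - 1) + q ^ k * gaussBinom q N k :=
  rfl

theorem gaussBinom_eq_zero {N : ℕ} {k : ℤ} (hk : k < 0 ∨ (N : ℤ) < k) :
    gaussBinom q N k = 0 := by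
  induction N generalizing k with
  | zero => simp only [gaussBinom, ite_eq_right_iff]; omega
  | succ N ih => rw [gaussBinom_succ, ih (by omega), ih (by omega), mul_zero, add_zero]

theorem gaussBinom_zero_right (N : ℕ) : gaussBinom q N 0 = 1 := by
  induction N with
  | zero => simp [gaussBinom]
  | succ N ih =>
    rw [gaussBinom_succ, gaussBinom_eq_zero (by omega), ih, zpow_zero, zero_add, one_mul]

theorem gaussBinom_self (N : ℕ) : gaussBinom q N N = 1 := by
  induction N with
  | zero => simp [gaussBinom]
  | succ N ih =>
    rw [gaussBinom_succ, Nat.cast_succ, add_sub_cancel_right, ih,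
      gaussBinom_eq_zero (by omega), mul_zero, add_zero]

theorem gaussBinom_succ' (hq : q ≠ 0) (N : ℕ) (k : ℤ) :
    gaussBinom q (N + 1) k = q ^ ((N : ℤ) + 1 - k) * gaussBinom q N (k - 1) + gaussBinom q N k := by
  induction N generalizing k with
  | zero =>
    simp only [gaussBinom, Nat.cast_zero, zero_add, sub_eq_zero]
    by_cases h0 : k = 0
    · simp [h0]
    by_cases h1 : k = 1
    · simp [h1]
    simp [h0, h1]
  | succ N ih =>
    have hexp : q ^ k * q ^ ((N : ℤ) + 1 - k) = q ^ ((N : ℤ) + 1 + 1 - k) * q ^ (k - 1) := by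
      rw [← zpow_add₀ hq, ← zpow_add₀ hq]; ring_nf
    conv_lhs => rw [gaussBinom_succ, ih, ih]
    conv_rhs => rw [gaussBinom_succ N, gaussBinom_succ N]
    rw [Nat.cast_succ, show (N : ℤ) + 1 - (k - 1) = N + 1 + 1 - k by ring]
    linear_combination gaussBinom q N (k - 1) * hexp

theorem gaussBinom_symm (hq : q ≠ 0) (N : ℕ) (k : ℤ) :
    gaussBinom q N k = gaussBinom q N (N - k) := by
  induction N generalizing k with
  | zero => by_cases h : k = 0 <;> simp [gaussBinom, h]
  | succ N ih =>
    rw [gaussBinom_succ' hq, gaussBinom_succ, ih, ih k, Nat.cast_succ,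
      show (N : ℤ) - (k - 1) = N + 1 - k by ring, show (N : ℤ) + 1 - k - 1 = N - k by ring]
    ring

theorem gaussBinom_mul_qPoch (j k : ℕ) :
    gaussBinom q (j + k) j * (qPoch q q j * qPoch q q k) = qPoch q q (j + k) := by
  induction j generalizing k with
  | zero => rw [zero_add, Nat.cast_zero, gaussBinom_zero_right, qPoch_zero, one_mul, one_mul]
  | succ j ihj =>
    induction k with
    | zero => rw [add_zero, gaussBinom_self, qPoch_zero, mul_one, one_mul]
    | succ k ihk =>
      have hj := ihj (k + 1)
      rw [show j + (k + 1) = j + 1 + k by ring] at hj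
      rw [show j + 1 + (k + 1) = j + 1 + k + 1 by ring, gaussBinom_succ, Nat.cast_add_one,
        add_sub_cancel_right, ← Nat.cast_add_one, zpow_natCast]
      rw [qPoch_succ q q j, qPoch_succ q q k] at *
      rw [qPoch_succ q q (j + 1 + k)]
      linear_combination (1 - q * q ^ j) * hj + q ^ (j + 1) * (1 - q * q ^ k) * ihk

def tri (t : ℤ) : ℤ := t * (t - 1) / 2

theorem tri_add_one (t : ℤ) : tri (t + 1) = tri t + t := by
  rw [tri, tri, show (t + 1) * (t + 1 - 1) = t * (t - 1) + t * 2 by ring,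
    Int.add_mul_ediv_right _ _ two_ne_zero]

theorem tri_one_sub (t : ℤ) : tri (1 - t) = tri t := by
  rw [tri, tri, show (1 - t) * (1 - t - 1) = t * (t - 1) by ring]

theorem tri_natCast (t : ℕ) : tri t = ((t ^ 2 - t) / 2 : ℕ) := by
  rw [tri, Int.natCast_div, Nat.cast_sub (Nat.le_self_pow two_ne_zero t)]
  push_cast
  ring_nf

noncomputable def signMod3 (t : ℤ) : ℂ :=
  if t % 3 = 0 then 1 else if t % 3 = 2 then -1 else 0

theorem signMod3_add_three (t : ℤ) : signMod3 (t + 3) = signMod3 t := by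
  simp only [signMod3, Int.add_emod_right]

theorem signMod3_neg_one_sub (t : ℤ) : signMod3 (-1 - t) = -signMod3 t := by
  have h : (-1 - t) % 3 = (2 - t % 3) % 3 := by omega
  have h3 : t % 3 = 0 ∨ t % 3 = 1 ∨ t % 3 = 2 := by omega
  rcases h3 with h3 | h3 | h3 <;> simp [signMod3, h, h3]

theorem zpow_tri_add_one (hq : q ≠ 0) (t : ℤ) : q ^ tri (t + 1) = q ^ tri t * q ^ t := by
  rw [tri_add_one, zpow_add₀ hq]

noncomputable def thetaSum (q : ℂ) (N : ℕ) (m c : ℤ) : ℂ :=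
  ∑ j ∈ range (N + 1), signMod3 (m - j) * q ^ tri (m - j + c) * gaussBinom q N j

theorem thetaSum_zero (m c : ℤ) : thetaSum q 0 m c = signMod3 m * q ^ tri (m + c) := by
  simp [thetaSum, gaussBinom]

theorem thetaSum_succ (hq : q ≠ 0) (N : ℕ) (m c : ℤ) :
    thetaSum q (N + 1) m c = thetaSum q N (m - 1) c + q ^ (m + c - 1) * thetaSum q N m (c - 1) := by
  have hleft : ∑ j ∈ range (N + 2),
      signMod3 (m - j) * q ^ tri (m - j + c) * gaussBinom q N (j - 1) = thetaSum q N (m - 1) c := by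
    rw [sum_range_succ', Nat.cast_zero, zero_sub, gaussBinom_eq_zero (by omega), mul_zero,
      add_zero]
    refine sum_congr rfl fun j _ => ?_
    rw [Nat.cast_add_one, add_sub_cancel_right, show m - (j + 1) = m - 1 - j by ring]
  have hright : ∑ j ∈ range (N + 2),
      signMod3 (m - j) * q ^ tri (m - j + c) * (q ^ (j : ℤ) * gaussBinom q N j) =
        q ^ (m + c - 1) * thetaSum q N m (c - 1) := by
    rw [sum_range_succ, gaussBinom_eq_zero (by omega), mul_zero, mul_zero, add_zero, thetaSum,
      mul_sum]
    refine sum_congr rfl fun j _ => ?_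
    rw [show m - j + c = m - j + (c - 1) + 1 by ring, zpow_tri_add_one hq]
    have hexp : q ^ (m - j + (c - 1)) * q ^ (j : ℤ) = q ^ (m + c - 1) := by
      rw [← zpow_add₀ hq]; ring_nf
    linear_combination signMod3 (m - j) * q ^ tri (m - j + (c - 1)) * gaussBinom q N j * hexp
  rw [thetaSum, ← hleft, ← hright, ← sum_add_distrib]
  exact sum_congr rfl fun j _ => by rw [gaussBinom_succ]; ring

theorem thetaSum_succ' (hq : q ≠ 0) (N : ℕ) (m c : ℤ) :
    thetaSum q (N + 1) m c =
      thetaSum q N m c + q ^ ((N : ℤ) + 1 - m - c) * thetaSum q N (m - 1) (c + 1) := by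
  have hleft : ∑ j ∈ range (N + 2),
      signMod3 (m - j) * q ^ tri (m - j + c) * gaussBinom q N j = thetaSum q N m c := by
    rw [sum_range_succ, gaussBinom_eq_zero (by omega), mul_zero, add_zero, thetaSum]
  have hright : ∑ j ∈ range (N + 2),
      signMod3 (m - j) * q ^ tri (m - j + c) * (q ^ ((N : ℤ) + 1 - j) * gaussBinom q N (j - 1)) =
        q ^ ((N : ℤ) + 1 - m - c) * thetaSum q N (m - 1) (c + 1) := by
    rw [sum_range_succ', Nat.cast_zero, zero_sub, gaussBinom_eq_zero (by omega), mul_zero,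
      mul_zero, add_zero, thetaSum, mul_sum]
    refine sum_congr rfl fun j _ => ?_
    rw [Nat.cast_add_one, add_sub_cancel_right, show m - (j + 1) = m - 1 - j by ring,
      show m - 1 - j + (c + 1) = m - 1 - j + c + 1 by ring, zpow_tri_add_one hq]
    have hexp : q ^ (m - 1 - j + c) * q ^ ((N : ℤ) + 1 - m - c) = q ^ ((N : ℤ) + 1 - (j + 1)) := by
      rw [← zpow_add₀ hq]; ring_nf
    linear_combination -(signMod3 (m - 1 - j) * q ^ tri (m - 1 - j + c) * gaussBinom q N j * hexp)
  rw [thetaSum, ← hleft, ← hright, ← sum_add_distrib]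
  exact sum_congr rfl fun j _ => by rw [gaussBinom_succ' hq]; ring

theorem thetaSum_add_three (N : ℕ) (m c : ℤ) : thetaSum q N (m + 3) c = thetaSum q N m (c + 3) := by
  refine sum_congr rfl fun j _ => ?_
  rw [show m + 3 - j = m - j + 3 by ring, signMod3_add_three, add_right_comm, add_assoc]

theorem thetaSum_reflect (hq : q ≠ 0) (N : ℕ) (m c : ℤ) :
    thetaSum q N m c = -thetaSum q N (N - m - 1) (2 - c) := by
  rw [thetaSum, ← sum_range_reflect, thetaSum, ← sum_neg_distrib]
  refine sum_congr rfl fun j hj => ?_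
  have hjN : j ≤ N := Nat.lt_succ_iff.mp (mem_range.mp hj)
  rw [show ((N + 1 - 1 - j : ℕ) : ℤ) = N - j by omega, ← gaussBinom_symm hq,
    show m - (N - j) = -1 - (N - m - 1 - j) by ring, signMod3_neg_one_sub,
    show -1 - (N - m - 1 - j) + c = 1 - (N - m - 1 - j + (2 - c)) by ring, tri_one_sub]
  ring

theorem thetaSum_odd_center_one_eq_zero (hq : q ≠ 0) (n : ℕ) : thetaSum q (2 * n + 1) n 1 = 0 := by
  have h := thetaSum_reflect hq (2 * n + 1) n 1
  rw [show ((2 * n + 1 : ℕ) : ℤ) - n - 1 = n by push_cast; ring,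
    show (2 : ℤ) - 1 = 1 by norm_num] at h
  linear_combination h / 2

theorem thetaSum_odd_succ_center (hq : q ≠ 0) (n : ℕ) :
    thetaSum q (2 * n + 1) (n + 1) 0 =
      thetaSum q (2 * n) (n + 1) 0 + q ^ n * thetaSum q (2 * n) n 1 := by
  rw [thetaSum_succ' hq, add_sub_cancel_right, zero_add,
    show ((2 * n : ℕ) : ℤ) + 1 - (n + 1) - 0 = n by push_cast; ring, zpow_natCast]

theorem thetaSum_even_succ_center (hq : q ≠ 0) (n : ℕ) :
    thetaSum q (2 * (n + 1)) (n + 1) 0 = thetaSum q (2 * n + 1) (n + 1) 0 := by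
  rw [mul_add_one, thetaSum_succ' hq, add_sub_cancel_right, zero_add,
    thetaSum_odd_center_one_eq_zero hq, mul_zero, add_zero]

theorem thetaSum_even_succ_center_one (hq : q ≠ 0) (n : ℕ) :
    thetaSum q (2 * (n + 1)) (n + 1) 1 = q ^ (n + 1) * thetaSum q (2 * n + 1) (n + 1) 0 := by
  rw [mul_add_one, thetaSum_succ hq, add_sub_cancel_right, sub_self,
    thetaSum_odd_center_one_eq_zero hq, zero_add,
    show (n : ℤ) + 1 + 1 - 1 = ((n + 1 : ℕ) : ℤ) by push_cast; ring, zpow_natCast]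

theorem thetaSum_even_succ_center_add_one (hq : q ≠ 0) (n : ℕ) :
    thetaSum q (2 * (n + 1)) (n + 1 + 1) 0 =
      (1 - q ^ (n + 1)) * thetaSum q (2 * n + 1) (n + 1) 0 := by
  have hshift : thetaSum q (2 * n + 1) (n + 1 + 1) (-1) = -thetaSum q (2 * n + 1) (n + 1) 0 := by
    rw [show (n : ℤ) + 1 + 1 = n - 1 + 3 by ring, thetaSum_add_three, thetaSum_reflect hq,
      show ((2 * n + 1 : ℕ) : ℤ) - (n - 1) - 1 = n + 1 by push_cast; ring]
    norm_num
  rw [mul_add_one, thetaSum_succ hq, add_sub_cancel_right, zero_sub, hshift,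
    show (n : ℤ) + 1 + 1 + 0 - 1 = ((n + 1 : ℕ) : ℤ) by push_cast; ring, zpow_natCast]
  ring

noncomputable def trinomialProd (q : ℂ) (n : ℕ) : ℂ :=
  ∏ j ∈ range n, (1 - q ^ j + q ^ (2 * j))

theorem trinomialProd_succ (n : ℕ) :
    trinomialProd q (n + 1) = trinomialProd q n * (1 - q ^ n + q ^ (2 * n)) :=
  prod_range_succ _ n

theorem qPoch_neg_one_pow_three (n : ℕ) :
    qPoch (-1) (q ^ 3) n = trinomialProd q n * qPoch (-1) q n := by
  rw [qPoch, qPoch, trinomialProd, ← prod_mul_distrib]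
  exact prod_congr rfl fun j _ => by ring

theorem thetaSum_odd_succ_center_eq_prod (hq : q ≠ 0) (n : ℕ) :
    thetaSum q (2 * n + 1) (n + 1) 0 = trinomialProd q (n + 1) := by
  induction n with
  | zero =>
    rw [thetaSum_odd_succ_center hq, thetaSum_zero, thetaSum_zero]
    norm_num [signMod3, tri, trinomialProd]
  | succ n ih =>
    rw [thetaSum_odd_succ_center hq, Nat.cast_add_one, thetaSum_even_succ_center_add_one hq,
      thetaSum_even_succ_center_one hq, ih, trinomialProd_succ (n + 1)]
    ring

theorem thetaSum_odd_center_eq_prod (hq : q ≠ 0) (n : ℕ) :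
    thetaSum q (2 * n + 1) n 0 = (1 - q ^ (2 * n + 1)) * trinomialProd q n := by
  have hrec : thetaSum q (2 * n + 1) n 0 =
      thetaSum q (2 * n) n 0 - q ^ (n + 1) * thetaSum q (2 * n) n 1 := by
    rw [thetaSum_succ' hq, thetaSum_reflect hq (2 * n) (n - 1),
      show ((2 * n : ℕ) : ℤ) - (n - 1) - 1 = n by push_cast; ring,
      show ((2 * n : ℕ) : ℤ) + 1 - n - 0 = ((n + 1 : ℕ) : ℤ) by push_cast; ring, zpow_natCast]
    rw [show (2 : ℤ) - (0 + 1) = 1 by norm_num]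
    ring
  rcases n with _ | n
  · rw [hrec, thetaSum_zero, thetaSum_zero]
    norm_num [signMod3, tri, trinomialProd]
  · rw [hrec, Nat.cast_add_one, thetaSum_even_succ_center hq, thetaSum_even_succ_center_one hq,
      thetaSum_odd_succ_center_eq_prod hq]
    ring

theorem thetaSum_odd_center_eq_sum (hq : q ≠ 0) (n : ℕ) :
    thetaSum q (2 * n + 1) n 0 = ∑ t ∈ range (n + 1),
      signMod3 t * (q ^ tri t - q ^ tri (t + 2)) * gaussBinom q (2 * n + 1) (n - t : ℕ) := by
  set f : ℤ → ℂ := fun t => signMod3 t * (q ^ tri t - q ^ tri (t + 2)) with hf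
  have hdiff : thetaSum q (2 * n + 1) n 0 - thetaSum q (2 * n + 1) n 2 =
      ∑ j ∈ range (2 * n + 1 + 1), f (n - j) * gaussBinom q (2 * n + 1) j := by
    rw [thetaSum, thetaSum, ← sum_sub_distrib]
    exact sum_congr rfl fun j _ => by rw [add_zero]; ring
  have hneg : thetaSum q (2 * n + 1) n 2 = -thetaSum q (2 * n + 1) n 0 := by
    rw [thetaSum_reflect hq, show ((2 * n + 1 : ℕ) : ℤ) - n - 1 = n by push_cast; ring]
    norm_num
  have hlow : ∑ j ∈ range (n + 1), f (n - j) * gaussBinom q (2 * n + 1) j =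
      ∑ t ∈ range (n + 1), f t * gaussBinom q (2 * n + 1) (n - t : ℕ) := by
    rw [← sum_range_reflect]
    refine sum_congr rfl fun t ht => ?_
    have htn : t ≤ n := Nat.lt_succ_iff.mp (mem_range.mp ht)
    rw [show ((n + 1 - 1 - t : ℕ) : ℤ) = n - t by omega, sub_sub_cancel, Nat.cast_sub htn]
  have hhigh : ∑ x ∈ range (n + 1),
      f (n - (n + 1 + x : ℕ)) * gaussBinom q (2 * n + 1) (n + 1 + x : ℕ) =
      ∑ t ∈ range (n + 1), f t * gaussBinom q (2 * n + 1) (n - t : ℕ) := by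
    refine sum_congr rfl fun t ht => ?_
    have htn : t ≤ n := Nat.lt_succ_iff.mp (mem_range.mp ht)
    rw [gaussBinom_symm hq, show ((2 * n + 1 : ℕ) : ℤ) - (n + 1 + t : ℕ) = (n - t : ℕ) by omega,
      show (n : ℤ) - (n + 1 + t : ℕ) = -1 - t by push_cast; ring]
    simp only [hf]
    rw [signMod3_neg_one_sub, show (-1 : ℤ) - t = 1 - (t + 2) by ring, tri_one_sub,
      show (1 : ℤ) - (t + 2) + 2 = 1 - t by ring, tri_one_sub]
    ring
  rw [show 2 * n + 1 + 1 = (n + 1) + (n + 1) by ring, sum_range_add, hlow, hhigh, hneg] at hdiff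
  linear_combination hdiff / 2

theorem ite_eq_signMod3_mul_zpow_tri (t : ℕ) :
    (if t % 3 = 0 then q ^ ((t ^ 2 - t) / 2)
      else if t % 3 = 2 then -q ^ ((t ^ 2 - t) / 2) else 0) = signMod3 t * q ^ tri t := by
  rw [tri_natCast, zpow_natCast, signMod3, show (t : ℤ) % 3 = (t % 3 : ℕ) by omega]
  rcases (by omega : t % 3 = 0 ∨ t % 3 = 1 ∨ t % 3 = 2) with h | h | h <;> simp [h]

theorem one_sub_pow_mul_zpow_tri (hq : q ≠ 0) (t : ℕ) :
    (1 - q ^ (2 * t + 1)) * q ^ tri t = q ^ tri t - q ^ tri (t + 2) := by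
  rw [show (t : ℤ) + 2 = t + 1 + 1 by ring, zpow_tri_add_one hq, zpow_tri_add_one hq, mul_assoc,
    ← zpow_add₀ hq, show (t : ℤ) + (t + 1) = ((2 * t + 1 : ℕ) : ℤ) by push_cast; ring, zpow_natCast]
  ring

theorem baileyTerm_eq (hq : q ≠ 0) (hP : ∀ m, qPoch q q m ≠ 0) {n t : ℕ} (ht : t ≤ n) :
    (1 - q ^ (2 * t + 1)) / (1 - q) *
        (if t % 3 = 0 then q ^ ((t ^ 2 - t) / 2)
          else if t % 3 = 2 then -q ^ ((t ^ 2 - t) / 2) else 0) /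
        (qPoch q q (n - t) * qPoch (q * q) q (n + t)) =
      signMod3 t * (q ^ tri t - q ^ tri (t + 2)) * gaussBinom q (2 * n + 1) (n - t : ℕ) /
        qPoch q q (2 * n + 1) := by
  have hden : (1 - q) * qPoch (q * q) q (n + t) = qPoch q q (n + t + 1) :=
    (qPoch_succ' q q _).symm
  have hbinom : gaussBinom q (2 * n + 1) (n - t : ℕ) * (qPoch q q (n - t) * qPoch q q (n + t + 1)) =
      qPoch q q (2 * n + 1) := by
    simpa only [show n - t + (n + t + 1) = 2 * n + 1 by omega] using
      gaussBinom_mul_qPoch (n - t) (n + t + 1)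
  obtain ⟨h1, hB⟩ := mul_ne_zero_iff.mp (hden ▸ hP (n + t + 1))
  rw [ite_eq_signMod3_mul_zpow_tri, eq_div_iff (hP _), ← hbinom, ← hden,
    ← one_sub_pow_mul_zpow_tri hq]
  generalize qPoch (q * q) q (n + t) = B at hB ⊢
  field_simp [hP (n - t)]

theorem bailey_sum_eq (hq : q ≠ 0) (hP : ∀ m, qPoch q q m ≠ 0) (n : ℕ) :
    ∑ t ∈ range (n + 1), (1 - q ^ (2 * t + 1)) / (1 - q) *
        (if t % 3 = 0 then q ^ ((t ^ 2 - t) / 2)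
          else if t % 3 = 2 then -q ^ ((t ^ 2 - t) / 2) else 0) /
        (qPoch q q (n - t) * qPoch (q * q) q (n + t)) =
      (1 - q ^ (2 * n + 1)) * trinomialProd q n / qPoch q q (2 * n + 1) := by
  rw [sum_congr rfl fun t ht => baileyTerm_eq hq hP (Nat.lt_succ_iff.mp (mem_range.mp ht)),
    ← sum_div, ← thetaSum_odd_center_eq_sum hq, thetaSum_odd_center_eq_prod hq]

end

theorem bailey_pair_5 (q : ℂ) (hq0 : 0 < ‖q‖) (hq1 : ‖q‖ < 1) :
    (IsBaileyPair q q
      (fun m => (1 - q ^ (2 * m + 1)) / (1 - q) *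
        (if m % 3 = 0 then q ^ ((m ^ 2 - m) / 2)
          else if m % 3 = 2 then -q ^ ((m ^ 2 - m) / 2) else 0))
      (fun n => qPoch (-1) (q ^ 3) n / (qPoch q q (2 * n) * qPoch (-1) q n))) ∧
    qPoch (-1) (q ^ 3) 0 / (qPoch q q (2 * 0) * qPoch (-1) q 0) = 1 ∧
    (∀ n : ℕ, 1 ≤ n →
      qPoch (-1) (q ^ 3) n / (qPoch q q (2 * n) * qPoch (-1) q n) =
        qPoch (-q ^ 3) (q ^ 3) (n - 1) / (qPoch q q (2 * n) * qPoch (-q) q (n - 1))) := by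
  have hq : q ≠ 0 := norm_pos_iff.mp hq0
  have hP : ∀ m, qPoch q q m ≠ 0 := qPoch_ne_zero hq1 hq1.le fun h => by simp [h] at hq1
  have hM : ∀ m, qPoch (-1) q m ≠ 0 := qPoch_ne_zero hq1 (by simp) (by norm_num)
  refine ⟨fun n => ?_, by simp [qPoch_zero], fun n hn => ?_⟩
  · beta_reduce
    have hodd : qPoch q q (2 * n + 1) = qPoch q q (2 * n) * (1 - q ^ (2 * n + 1)) := by
      rw [qPoch_succ, ← pow_succ']
    have hx : 1 - q ^ (2 * n + 1) ≠ 0 := right_ne_zero_of_mul (hodd ▸ hP _)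
    rw [bailey_sum_eq hq hP, qPoch_neg_one_pow_three, hodd, mul_div_mul_right _ _ (hM n),
      mul_comm (qPoch q q _), mul_div_mul_left _ _ hx]
  · obtain ⟨n, rfl⟩ := Nat.exists_eq_add_of_le' hn
    rw [Nat.add_sub_cancel, qPoch_succ', qPoch_succ', neg_one_mul, neg_one_mul, mul_left_comm,
      mul_div_mul_left _ _ (by norm_num : (1 : ℂ) - -1 ≠ 0)]
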